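/- arXiv:2312.14897 — 5 statements merged into one kernel-verified Lean document; each statement's English description precedes it below -/
import Mathlib

section
/- A monic quartic polynomial s^4 + a3*s^3 + a2*s^2 + a1*s + a0 with real coefficients has all roots with negative real part if and only if a3 > 0, a0 > 0, a1 > 0, and a3*a2*a1 > a1^2 + a3^2*a0 (Routh–Hurwitz criterion for degree 4). -/
open Polynomial Complex

/-- Every complex quartic has a root. -/
lemma rh_exists_root_quartic (c3 c2 c1 c0 : ℂ) :
    ∃ z : ℂ, z ^ 4 + c3 * z ^ 3 + c2 * z ^ 2 + c1 * z + c0 = 0 := by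
  have hdeg : (X ^ 4 + C c3 * X ^ 3 + C c2 * X ^ 2 + C c1 * X + C c0 : ℂ[X]).degree = 4 := by
    compute_degree!
  obtain ⟨z, hz⟩ := Complex.exists_root (f := X ^ 4 + C c3 * X ^ 3 + C c2 * X ^ 2 + C c1 * X + C c0)
    (by rw [hdeg]; norm_num)
  refine ⟨z, ?_⟩
  simpa [Polynomial.IsRoot] using hz

/-- Every complex cubic has a root. -/
lemma rh_exists_root_cubic (c2 c1 c0 : ℂ) :
    ∃ z : ℂ, z ^ 3 + c2 * z ^ 2 + c1 * z + c0 = 0 := by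
  have hdeg : (X ^ 3 + C c2 * X ^ 2 + C c1 * X + C c0 : ℂ[X]).degree = 3 := by
    compute_degree!
  obtain ⟨z, hz⟩ := Complex.exists_root (f := X ^ 3 + C c2 * X ^ 2 + C c1 * X + C c0)
    (by rw [hdeg]; norm_num)
  refine ⟨z, ?_⟩
  simpa [Polynomial.IsRoot] using hz

/-- z is a root of the real quadratic x^2 - 2 Re z x + |z|^2. -/
lemma rh_quad_vanish (z : ℂ) :
    z ^ 2 + ((-2 * z.re : ℝ) : ℂ) * z + ((Complex.normSq z : ℝ) : ℂ) = 0 := by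
  have ha : z + (starRingEnd ℂ) z = 2 * (z.re : ℂ) := by
    rw [Complex.add_conj]; push_cast; ring
  push_cast
  linear_combination z * ha - Complex.mul_conj z

/-- A real monic quadratic all of whose complex roots have negative real part
has positive coefficients. -/
lemma rh_quad_pos (D E : ℝ)
    (h : ∀ z : ℂ, z ^ 2 + (D : ℂ) * z + (E : ℂ) = 0 → z.re < 0) : 0 < D ∧ 0 < E := by
  obtain ⟨w, hw⟩ := IsAlgClosed.exists_pow_nat_eq ((D : ℂ) ^ 2 - 4 * (E : ℂ)) (n := 2)
    (by norm_num)
  set r1 : ℂ := (-(D : ℂ) + w) / 2 with hr1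
  set r2 : ℂ := (-(D : ℂ) - w) / 2 with hr2
  have h1 : r1 ^ 2 + (D : ℂ) * r1 + (E : ℂ) = 0 := by rw [hr1]; linear_combination hw / 4
  have h2 : r2 ^ 2 + (D : ℂ) * r2 + (E : ℂ) = 0 := by rw [hr2]; linear_combination hw / 4
  have hre1 := h r1 h1
  have hre2 := h r2 h2
  have hsum : r1 + r2 = ((-D : ℝ) : ℂ) := by rw [hr1, hr2]; push_cast; ring
  have hsumre : r1.re + r2.re = -D := by
    have := congrArg Complex.re hsum
    simpa using this
  have hsumim : r1.im + r2.im = 0 := by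
    have := congrArg Complex.im hsum
    simpa using this
  have hprod : r1 * r2 = ((E : ℝ) : ℂ) := by rw [hr1, hr2]; linear_combination -hw / 4
  have hprodre : r1.re * r2.re - r1.im * r2.im = E := by
    have := congrArg Complex.re hprod
    simpa [Complex.mul_re] using this
  have h2im : r2.im = -r1.im := by linarith
  have hEeq : E = r1.re * r2.re + r1.im ^ 2 := by
    rw [h2im] at hprodre
    linear_combination -hprodre
  constructor
  · linarith
  · nlinarith [mul_pos (neg_pos.mpr hre1) (neg_pos.mpr hre2), sq_nonneg r1.im]

/-- Dividing a real quartic by the real quadratic attached to a nonreal root. -/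
lemma rh_quartic_factor (a0 a1 a2 a3 : ℝ) {z : ℂ} (him : z.im ≠ 0)
    (hz : z ^ 4 + (a3 : ℂ) * z ^ 3 + (a2 : ℂ) * z ^ 2 + (a1 : ℂ) * z + (a0 : ℂ) = 0) :
    ∃ D E : ℝ,
      a3 = -2 * z.re + D ∧
      a2 = Complex.normSq z + E + (-2 * z.re) * D ∧
      a1 = (-2 * z.re) * E + Complex.normSq z * D ∧
      a0 = Complex.normSq z * E := by
  set B : ℝ := -2 * z.re with hB
  set Cc : ℝ := Complex.normSq z with hC
  set D : ℝ := a3 - B with hD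
  set E : ℝ := a2 - Cc - B * D with hE
  set F : ℝ := a1 - B * E - Cc * D with hF
  set G : ℝ := a0 - Cc * E with hG
  have key : ∀ w : ℂ, w ^ 4 + (a3 : ℂ) * w ^ 3 + (a2 : ℂ) * w ^ 2 + (a1 : ℂ) * w + (a0 : ℂ)
      = (w ^ 2 + (B : ℂ) * w + (Cc : ℂ)) * (w ^ 2 + (D : ℂ) * w + (E : ℂ))
        + ((F : ℂ) * w + (G : ℂ)) := by
    intro w
    rw [hF, hG, hE, hD]
    push_cast
    ring
  have hq : z ^ 2 + (B : ℂ) * z + (Cc : ℂ) = 0 := by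
    rw [hB, hC]; exact rh_quad_vanish z
  have hzc : (starRingEnd ℂ) z ^ 4 + (a3 : ℂ) * (starRingEnd ℂ) z ^ 3
      + (a2 : ℂ) * (starRingEnd ℂ) z ^ 2 + (a1 : ℂ) * (starRingEnd ℂ) z + (a0 : ℂ) = 0 := by
    have := congrArg (starRingEnd ℂ) hz
    simpa [map_add, map_mul, map_pow, Complex.conj_ofReal] using this
  have hqc : (starRingEnd ℂ) z ^ 2 + (B : ℂ) * (starRingEnd ℂ) z + (Cc : ℂ) = 0 := by
    rw [hB, hC]
    have := rh_quad_vanish ((starRingEnd ℂ) z)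
    simpa [Complex.normSq_conj] using this
  have e1 : (F : ℂ) * z + (G : ℂ) = 0 := by
    linear_combination hz - key z - (z ^ 2 + (D : ℂ) * z + (E : ℂ)) * hq
  have e2 : (F : ℂ) * (starRingEnd ℂ) z + (G : ℂ) = 0 := by
    linear_combination hzc - key ((starRingEnd ℂ) z)
      - ((starRingEnd ℂ) z ^ 2 + (D : ℂ) * (starRingEnd ℂ) z + (E : ℂ)) * hqc
  have hzne : z - (starRingEnd ℂ) z ≠ 0 := by
    intro hcontra
    apply him
    rw [← Complex.conj_eq_iff_im]
    linear_combination -hcontra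
  have hF0 : F = 0 := by
    have : (F : ℂ) * (z - (starRingEnd ℂ) z) = 0 := by linear_combination e1 - e2
    rcases mul_eq_zero.mp this with h' | h'
    · exact_mod_cast h'
    · exact absurd h' hzne
  have hG0 : G = 0 := by
    have : (G : ℂ) = 0 := by
      have hFC : (F : ℂ) = 0 := by exact_mod_cast hF0
      linear_combination e1 - z * hFC
    exact_mod_cast this
  refine ⟨D, E, by rw [hD]; ring, by rw [hE, hD]; ring, ?_, ?_⟩
  · rw [hF] at hF0; linarith
  · rw [hG] at hG0; linarith

/-- Dividing a real cubic by the real quadratic attached to a nonreal root. -/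
lemma rh_cubic_factor (b0 b1 b2 : ℝ) {z : ℂ} (him : z.im ≠ 0)
    (hz : z ^ 3 + (b2 : ℂ) * z ^ 2 + (b1 : ℂ) * z + (b0 : ℂ) = 0) :
    ∃ t : ℝ,
      b2 = -2 * z.re + t ∧
      b1 = Complex.normSq z + (-2 * z.re) * t ∧
      b0 = Complex.normSq z * t := by
  set B : ℝ := -2 * z.re with hB
  set Cc : ℝ := Complex.normSq z with hC
  set t : ℝ := b2 - B with ht
  set F : ℝ := b1 - Cc - B * t with hF
  set G : ℝ := b0 - Cc * t with hG
  have key : ∀ w : ℂ, w ^ 3 + (b2 : ℂ) * w ^ 2 + (b1 : ℂ) * w + (b0 : ℂ)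
      = (w ^ 2 + (B : ℂ) * w + (Cc : ℂ)) * (w + (t : ℂ)) + ((F : ℂ) * w + (G : ℂ)) := by
    intro w
    rw [hF, hG, ht]
    push_cast
    ring
  have hq : z ^ 2 + (B : ℂ) * z + (Cc : ℂ) = 0 := by
    rw [hB, hC]; exact rh_quad_vanish z
  have hzc : (starRingEnd ℂ) z ^ 3 + (b2 : ℂ) * (starRingEnd ℂ) z ^ 2
      + (b1 : ℂ) * (starRingEnd ℂ) z + (b0 : ℂ) = 0 := by
    have := congrArg (starRingEnd ℂ) hz
    simpa [map_add, map_mul, map_pow, Complex.conj_ofReal] using this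
  have hqc : (starRingEnd ℂ) z ^ 2 + (B : ℂ) * (starRingEnd ℂ) z + (Cc : ℂ) = 0 := by
    rw [hB, hC]
    have := rh_quad_vanish ((starRingEnd ℂ) z)
    simpa [Complex.normSq_conj] using this
  have e1 : (F : ℂ) * z + (G : ℂ) = 0 := by
    linear_combination hz - key z - (z + (t : ℂ)) * hq
  have e2 : (F : ℂ) * (starRingEnd ℂ) z + (G : ℂ) = 0 := by
    linear_combination hzc - key ((starRingEnd ℂ) z) - ((starRingEnd ℂ) z + (t : ℂ)) * hqc
  have hzne : z - (starRingEnd ℂ) z ≠ 0 := by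
    intro hcontra
    apply him
    rw [← Complex.conj_eq_iff_im]
    linear_combination -hcontra
  have hF0 : F = 0 := by
    have : (F : ℂ) * (z - (starRingEnd ℂ) z) = 0 := by linear_combination e1 - e2
    rcases mul_eq_zero.mp this with h' | h'
    · exact_mod_cast h'
    · exact absurd h' hzne
  have hG0 : G = 0 := by
    have : (G : ℂ) = 0 := by
      have hFC : (F : ℂ) = 0 := by exact_mod_cast hF0
      linear_combination e1 - z * hFC
    exact_mod_cast this
  refine ⟨t, by rw [ht]; ring, ?_, ?_⟩
  · rw [hF] at hF0; linarith
  · rw [hG] at hG0; linarith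

/-- A stable real quartic factors into two real quadratics with positive coefficients. -/
lemma rh_factor_of_stable (a0 a1 a2 a3 : ℝ)
    (h : ∀ z : ℂ, z ^ 4 + (a3 : ℂ) * z ^ 3 + (a2 : ℂ) * z ^ 2 + (a1 : ℂ) * z + (a0 : ℂ) = 0 →
      z.re < 0) :
    ∃ b c d e : ℝ, 0 < b ∧ 0 < c ∧ 0 < d ∧ 0 < e ∧
      a3 = b + d ∧ a2 = c + e + b * d ∧ a1 = b * e + c * d ∧ a0 = c * e := by
  obtain ⟨z, hz⟩ := rh_exists_root_quartic (a3 : ℂ) (a2 : ℂ) (a1 : ℂ) (a0 : ℂ)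
  have hzre : z.re < 0 := h z hz
  by_cases him : z.im = 0
  · -- real root x < 0
    have hzx : z = ((z.re : ℝ) : ℂ) := by
      apply Complex.ext <;> simp [him]
    set x : ℝ := z.re with hxdef
    have hre : x ^ 4 + a3 * x ^ 3 + a2 * x ^ 2 + a1 * x + a0 = 0 := by
      rw [hzx] at hz
      exact_mod_cast hz
    set b2 : ℝ := a3 + x with hb2
    set b1 : ℝ := a2 + x * b2 with hb1
    set b0 : ℝ := a1 + x * b1 with hb0
    have hcut : ∀ w : ℂ, w ^ 4 + (a3 : ℂ) * w ^ 3 + (a2 : ℂ) * w ^ 2 + (a1 : ℂ) * w + (a0 : ℂ)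
        = (w - (x : ℂ)) * (w ^ 3 + (b2 : ℂ) * w ^ 2 + (b1 : ℂ) * w + (b0 : ℂ)) := by
      intro w
      have hreC : (x : ℂ) ^ 4 + (a3 : ℂ) * (x : ℂ) ^ 3 + (a2 : ℂ) * (x : ℂ) ^ 2
          + (a1 : ℂ) * (x : ℂ) + (a0 : ℂ) = 0 := by exact_mod_cast hre
      rw [hb0, hb1, hb2]
      push_cast
      linear_combination hreC
    have hcub : ∀ w : ℂ, w ^ 3 + (b2 : ℂ) * w ^ 2 + (b1 : ℂ) * w + (b0 : ℂ) = 0 → w.re < 0 := by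
      intro w hw
      exact h w (by rw [hcut w, hw, mul_zero])
    obtain ⟨z2, hz2⟩ := rh_exists_root_cubic (b2 : ℂ) (b1 : ℂ) (b0 : ℂ)
    have hz2re : z2.re < 0 := hcub z2 hz2
    by_cases him2 : z2.im = 0
    · -- second real root
      have hz2x : z2 = ((z2.re : ℝ) : ℂ) := by
        apply Complex.ext <;> simp [him2]
      set x2 : ℝ := z2.re with hx2def
      have hre2 : x2 ^ 3 + b2 * x2 ^ 2 + b1 * x2 + b0 = 0 := by
        rw [hz2x] at hz2
        exact_mod_cast hz2
      set α : ℝ := b2 + x2 with hα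
      set β : ℝ := b1 + x2 * α with hβ
      have hcut2 : ∀ w : ℂ, w ^ 3 + (b2 : ℂ) * w ^ 2 + (b1 : ℂ) * w + (b0 : ℂ)
          = (w - (x2 : ℂ)) * (w ^ 2 + (α : ℂ) * w + (β : ℂ)) := by
        intro w
        have hre2C : (x2 : ℂ) ^ 3 + (b2 : ℂ) * (x2 : ℂ) ^ 2 + (b1 : ℂ) * (x2 : ℂ)
            + (b0 : ℂ) = 0 := by exact_mod_cast hre2
        rw [hβ, hα]
        push_cast
        linear_combination hre2C
      have hquad : ∀ w : ℂ, w ^ 2 + (α : ℂ) * w + (β : ℂ) = 0 → w.re < 0 := by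
        intro w hw
        exact hcub w (by rw [hcut2 w, hw, mul_zero])
      obtain ⟨hαpos, hβpos⟩ := rh_quad_pos α β hquad
      have hb0e : b0 = -x2 * β := by linear_combination hre2 + x2 * hβ + x2 ^ 2 * hα
      have ha0e : a0 = -x * b0 := by
        linear_combination hre + x * hb0 + x ^ 2 * hb1 + x ^ 3 * hb2
      refine ⟨-x - x2, x * x2, α, β, by linarith, mul_pos_of_neg_of_neg hzre hz2re,
        hαpos, hβpos, ?_, ?_, ?_, ?_⟩
      · linear_combination -hα - hb2
      · linear_combination -hb1 - hβ + x * hα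
      · linear_combination -hb0 + hre2 + (x + x2) * hβ + x2 ^ 2 * hα
      · rw [ha0e, hb0e]; ring
    · -- nonreal root of the cubic
      obtain ⟨t, ht2, ht1, ht0⟩ := rh_cubic_factor b0 b1 b2 him2 hz2
      set B : ℝ := -2 * z2.re with hBdef
      set Cc : ℝ := Complex.normSq z2 with hCdef
      have hB : 0 < B := by rw [hBdef]; linarith
      have hC : 0 < Cc := by
        rw [hCdef]
        apply Complex.normSq_pos.mpr
        intro hz0
        rw [hz0] at hz2re
        simp at hz2re
      have htpos : 0 < t := by
        -- -t is a root of the cubic, hence of the quartic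
        have hroot : ((-t : ℝ) : ℂ) ^ 3 + (b2 : ℂ) * ((-t : ℝ) : ℂ) ^ 2
            + (b1 : ℂ) * ((-t : ℝ) : ℂ) + (b0 : ℂ) = 0 := by
          rw [ht2, ht1, ht0]
          push_cast
          ring
        have := hcub _ hroot
        simp at this
        linarith
      refine ⟨B, Cc, t - x, -x * t, hB, hC, by linarith, by nlinarith, ?_, ?_, ?_, ?_⟩
      · linear_combination ht2 + hb2
      · linear_combination -hb1 + ht1 - x * ht2
      · linear_combination -hb0 + ht0 - x * ht1
      · linear_combination hre + x * hb0 + x ^ 2 * hb1 + x ^ 3 * hb2 - x * ht0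
  · -- nonreal root of the quartic
    obtain ⟨D, E, h3, h2, h1, h0⟩ := rh_quartic_factor a0 a1 a2 a3 him hz
    set B : ℝ := -2 * z.re with hBdef
    set Cc : ℝ := Complex.normSq z with hCdef
    have hB : 0 < B := by rw [hBdef]; linarith
    have hC : 0 < Cc := by
      rw [hCdef]
      apply Complex.normSq_pos.mpr
      intro hz0
      rw [hz0] at hzre
      simp at hzre
    have hcut : ∀ w : ℂ, w ^ 4 + (a3 : ℂ) * w ^ 3 + (a2 : ℂ) * w ^ 2 + (a1 : ℂ) * w + (a0 : ℂ)
        = (w ^ 2 + (B : ℂ) * w + (Cc : ℂ)) * (w ^ 2 + (D : ℂ) * w + (E : ℂ)) := by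
      intro w
      rw [h3, h2, h1, h0, hBdef, hCdef]
      push_cast
      ring
    have hquad : ∀ w : ℂ, w ^ 2 + (D : ℂ) * w + (E : ℂ) = 0 → w.re < 0 := by
      intro w hw
      exact h w (by rw [hcut w, hw, mul_zero])
    obtain ⟨hDpos, hEpos⟩ := rh_quad_pos D E hquad
    exact ⟨B, Cc, D, E, hB, hC, hDpos, hEpos, h3, h2, h1, h0⟩

/-- Routh–Hurwitz criterion for a monic real quartic. -/
theorem routh_hurwitz_quartic (a0 a1 a2 a3 : ℝ) :
    (∀ z : ℂ, z ^ 4 + (a3 : ℂ) * z ^ 3 + (a2 : ℂ) * z ^ 2 + (a1 : ℂ) * z + (a0 : ℂ) = 0 →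
      z.re < 0) ↔
    (a3 > 0 ∧ a0 > 0 ∧ a1 > 0 ∧ a3 * a2 * a1 > a1 ^ 2 + a3 ^ 2 * a0) := by
  constructor
  · intro h
    obtain ⟨b, c, d, e, hb, hc, hd, he, h3, h2, h1, h0⟩ := rh_factor_of_stable a0 a1 a2 a3 h
    subst h3 h2 h1 h0
    refine ⟨by linarith, mul_pos hc he, by positivity, ?_⟩
    have key : (b + d) * (c + e + b * d) * (b * e + c * d)
        - ((b * e + c * d) ^ 2 + (b + d) ^ 2 * (c * e))
        = b * d * ((c - e) ^ 2 + (b + d) * (b * e + c * d)) := by ring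
    have hbd : 0 < b * d := mul_pos hb hd
    have hK : 0 < (b + d) * (b * e + c * d) := by positivity
    nlinarith [mul_pos hbd hK, mul_nonneg hbd.le (sq_nonneg (c - e))]
  · rintro ⟨h3, h0, h1, hΔ⟩ z hz
    by_contra hre
    push_neg at hre
    by_cases him : z.im = 0
    · -- real root x ≥ 0 : impossible since all coefficients positive
      have hzx : z = ((z.re : ℝ) : ℂ) := by
        apply Complex.ext <;> simp [him]
      set x : ℝ := z.re with hxdef
      have hxe : x ^ 4 + a3 * x ^ 3 + a2 * x ^ 2 + a1 * x + a0 = 0 := by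
        rw [hzx] at hz
        exact_mod_cast hz
      have ha2 : 0 < a2 := by nlinarith [sq_nonneg a1, sq_nonneg a3, mul_pos h3 h1]
      nlinarith [pow_nonneg hre 4, pow_nonneg hre 3, pow_nonneg hre 2,
        mul_nonneg h3.le (pow_nonneg hre 3), mul_nonneg ha2.le (pow_nonneg hre 2),
        mul_nonneg h1.le hre]
    · obtain ⟨D, E, g3, g2, g1, g0⟩ := rh_quartic_factor a0 a1 a2 a3 him hz
      set B : ℝ := -2 * z.re with hBdef
      set Cc : ℝ := Complex.normSq z with hCdef
      have hBle : B ≤ 0 := by rw [hBdef]; linarith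
      have hid : a3 * a2 * a1 - a1 ^ 2 - a3 ^ 2 * a0
          = B * D * ((Cc - E) ^ 2 + a3 * a1) := by
        rw [g3, g2, g1, g0]; ring
      have hK : 0 < (Cc - E) ^ 2 + a3 * a1 := by nlinarith [sq_nonneg (Cc - E), mul_pos h3 h1]
      have hBD : 0 < B * D := by
        by_contra hbd
        push_neg at hbd
        nlinarith [hid, mul_nonneg (neg_nonneg.mpr hbd) hK.le]
      have hBneg : B < 0 := by
        rcases hBle.lt_or_eq with h' | h'
        · exact h'
        · rw [h'] at hBD; simp at hBD
      have hDneg : D < 0 := by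
        by_contra hD'
        push_neg at hD'
        nlinarith
      linarith [g3]
end

section
/- For the platoon characteristic polynomial φ(s) = s^4 + ((1 + n*κa)/ς) s^3 + (n*κv/ς) s^2 + (n*κp/ς) s + (n*κs/ς) with ς > 0 and n > 0, all roots have negative real part if and only if κs > 0, κp > 0, κa > -1/n, κp < κv(1 + n κa)/ς, and κv > (κs (1 + n κa)^2 + ς n κp^2) / (n (1 + n κa) κp). -/
/-!
A monic real quartic factors into two monic real quadratics: after removing the cubic term,
`y⁴ + P y² + Q y + R = (y² + u y + v)(y² - u y + w)` with `u² = U` for a positive root `U` of the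
resolvent cubic `U³ + 2PU² + (P² - 4R)U - Q²`, which exists by the intermediate value theorem
when `Q ≠ 0` (the cubic is `-Q²` at `0`) and is `2√R - P` when `Q = 0 < 4R - P²`; in the remaining
case `u = 0`. A real monic quadratic has all roots in the open left half plane iff both
coefficients are positive. For `(z² + p z + q)(z² + r z + t)` the Hurwitz gap is
`abc - c² - a²d = pr((q - t)² + ac)`, so the Hurwitz conditions `a, c, d > 0`, `a²d + c² < abc`
force `pr > 0`, then `p, r > 0`, then `q, t > 0`, and conversely. The platoon conditions are these
Hurwitz conditions after clearing the positive factors `ς` and `n`.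
-/

open Complex

lemma exists_pos_resolvent_root {P Q R : ℝ} (h : ¬(Q = 0 ∧ 4 * R ≤ P ^ 2)) :
    ∃ U : ℝ, 0 < U ∧ U ^ 3 + 2 * P * U ^ 2 + (P ^ 2 - 4 * R) * U - Q ^ 2 = 0 := by
  by_cases hQ : Q = 0
  · have hPR : P ^ 2 < 4 * R := by simpa [hQ] using h
    have hsq := Real.sq_sqrt (by nlinarith [sq_nonneg P] : 0 ≤ R)
    refine ⟨2 * √R - P, by nlinarith [Real.sqrt_nonneg R], ?_⟩
    rw [hQ]
    linear_combination 4 * (2 * √R - P) * hsq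
  · set M : ℝ := 1 + 2 * |P| + |P ^ 2 - 4 * R| + Q ^ 2
    have hM : 1 ≤ M := by linarith [abs_nonneg P, abs_nonneg (P ^ 2 - 4 * R), sq_nonneg Q]
    have hP : -(2 * |P|) ≤ 2 * P := by linarith [neg_abs_le P]
    have hD : -|P ^ 2 - 4 * R| ≤ P ^ 2 - 4 * R := neg_abs_le _
    -- `M ≥ 1` bounds every lower-order term by a multiple of `M ^ 2`
    have hMpos : 0 < M ^ 3 + 2 * P * M ^ 2 + (P ^ 2 - 4 * R) * M - Q ^ 2 := by
      nlinarith [mul_le_mul_of_nonneg_right hP (sq_nonneg M),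
        mul_le_mul_of_nonneg_right hD (by linarith : (0 : ℝ) ≤ M),
        mul_le_mul_of_nonneg_left hM (abs_nonneg (P ^ 2 - 4 * R)),
        mul_le_mul_of_nonneg_left (one_le_pow₀ hM : 1 ≤ M ^ 2) (sq_nonneg Q)]
    obtain ⟨U, hU, hroot⟩ := intermediate_value_Ioo (by linarith : (0 : ℝ) ≤ M)
      (f := fun U => U ^ 3 + 2 * P * U ^ 2 + (P ^ 2 - 4 * R) * U - Q ^ 2) (by fun_prop)
      ⟨by simpa using pow_pos (abs_pos.mpr hQ) 2, hMpos⟩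
    exact ⟨U, hU.1, hroot⟩

lemma exists_depressed_quartic_factor (P Q R : ℝ) :
    ∃ u v w : ℝ, v + w - u ^ 2 = P ∧ u * (w - v) = Q ∧ v * w = R := by
  by_cases h : Q = 0 ∧ 4 * R ≤ P ^ 2
  · obtain ⟨rfl, hD⟩ := h
    have hsq := Real.sq_sqrt (sub_nonneg.mpr hD)
    exact ⟨0, (P - √(P ^ 2 - 4 * R)) / 2, (P + √(P ^ 2 - 4 * R)) / 2, by ring, by ring,
      by linear_combination -hsq / 4⟩
  · obtain ⟨U, hU, hroot⟩ := exists_pos_resolvent_root h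
    have hsq := Real.sq_sqrt hU.le
    have hu : √U ≠ 0 := (Real.sqrt_pos.mpr hU).ne'
    refine ⟨√U, (P + U - Q / √U) / 2, (P + U + Q / √U) / 2, by rw [hsq]; ring,
      by field_simp; ring, ?_⟩
    field_simp
    linear_combination hroot + (2 * P * U + P ^ 2 + U ^ 2 - 4 * R) * hsq

lemma exists_quartic_factor (a b c d : ℝ) :
    ∃ p q r t : ℝ, a = p + r ∧ b = q + t + p * r ∧ c = p * t + q * r ∧ d = q * t := by
  obtain ⟨u, v, w, h1, h2, h3⟩ := exists_depressed_quartic_factor (b - 3 * a ^ 2 / 8)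
    (c - a * b / 2 + a ^ 3 / 8) (d - a * c / 4 + a ^ 2 * b / 16 - 3 * a ^ 4 / 256)
  refine ⟨a / 2 + u, a ^ 2 / 16 + u * a / 4 + v, a / 2 - u, a ^ 2 / 16 - u * a / 4 + w,
    by ring, by linear_combination -h1, by linear_combination -(a / 2) * h1 - h2,
    by linear_combination -(a ^ 2 / 16) * h1 - (a / 4) * h2 - h3⟩

lemma exists_sq_eq_of_re_eq_sqrt (D : ℝ) : ∃ s : ℂ, s ^ 2 = D ∧ s.re = √D := by
  rcases le_or_gt 0 D with hD | hD
  · exact ⟨√D, by rw [← ofReal_pow, Real.sq_sqrt hD], rfl⟩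
  · refine ⟨√(-D) * I, ?_, by simp [Real.sqrt_eq_zero'.mpr hD.le]⟩
    rw [mul_pow, I_sq, ← ofReal_pow, Real.sq_sqrt (by linarith)]
    push_cast; ring

lemma exists_quadratic_root_re_eq (p q : ℝ) :
    ∃ z : ℂ, z ^ 2 + p * z + q = 0 ∧ z.re = (-p + √(p ^ 2 - 4 * q)) / 2 := by
  obtain ⟨s, hs, hre⟩ := exists_sq_eq_of_re_eq_sqrt (p ^ 2 - 4 * q)
  refine ⟨(-p + s) / 2, ?_, by simp [hre]⟩
  push_cast at hs
  linear_combination hs / 4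

lemma quadratic_root_re_neg {p q : ℝ} (hp : 0 < p) (hq : 0 < q) {z : ℂ}
    (h : z ^ 2 + p * z + q = 0) : z.re < 0 := by
  have hre : z.re ^ 2 - z.im ^ 2 + p * z.re + q = 0 := by
    simpa [pow_two] using congrArg Complex.re h
  have him : z.im * (2 * z.re + p) = 0 := by
    have := congrArg Complex.im h
    simp only [pow_two, add_im, mul_im, ofReal_re, ofReal_im, zero_im] at this
    linear_combination this
  rcases mul_eq_zero.mp him with hy | hx
  · rw [hy] at hre
    nlinarith
  · linarith

lemma quadratic_roots_re_neg_iff (p q : ℝ) :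
    (∀ z : ℂ, z ^ 2 + p * z + q = 0 → z.re < 0) ↔ 0 < p ∧ 0 < q := by
  refine ⟨fun h => ?_, fun ⟨hp, hq⟩ _ => quadratic_root_re_neg hp hq⟩
  obtain ⟨z, hz, hre⟩ := exists_quadratic_root_re_eq p q
  have hlt : √(p ^ 2 - 4 * q) < p := by linarith [h z hz]
  have hp : 0 < p := (Real.sqrt_nonneg _).trans_lt hlt
  exact ⟨hp, by linarith [(Real.sqrt_lt' hp).mp hlt]⟩

lemma hurwitz_quartic_iff_of_factor (p q r t : ℝ) :
    ((0 < p ∧ 0 < q) ∧ 0 < r ∧ 0 < t) ↔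
      0 < p + r ∧ 0 < p * t + q * r ∧ 0 < q * t ∧
        (p + r) ^ 2 * (q * t) + (p * t + q * r) ^ 2 <
          (p + r) * (q + t + p * r) * (p * t + q * r) := by
  have gap : (p + r) * (q + t + p * r) * (p * t + q * r) -
      ((p + r) ^ 2 * (q * t) + (p * t + q * r) ^ 2) =
        p * r * ((q - t) ^ 2 + (p + r) * (p * t + q * r)) := by ring
  constructor
  · rintro ⟨⟨hp, hq⟩, hr, ht⟩
    refine ⟨by positivity, by positivity, by positivity, sub_pos.mp ?_⟩
    rw [gap]
    positivity
  · rintro ⟨ha, hc, hd, hΔ⟩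
    have hpr : 0 < p * r := pos_of_mul_pos_left (gap ▸ sub_pos.mpr hΔ) (by positivity)
    have hp : 0 < p := by nlinarith
    have hr : 0 < r := by nlinarith
    have hqc : 0 < q * (p * t + q * r) := by
      nlinarith [mul_pos hp hd, mul_nonneg (sq_nonneg q) hr.le]
    have htc : 0 < t * (p * t + q * r) := by
      nlinarith [mul_pos hr hd, mul_nonneg (sq_nonneg t) hp.le]
    exact ⟨⟨hp, (pos_iff_pos_of_mul_pos hqc).mpr hc⟩, hr, (pos_iff_pos_of_mul_pos htc).mpr hc⟩

theorem quartic_roots_re_neg_iff (a b c d : ℝ) :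
    (∀ z : ℂ, z ^ 4 + a * z ^ 3 + b * z ^ 2 + c * z + d = 0 → z.re < 0) ↔
      0 < a ∧ 0 < c ∧ 0 < d ∧ a ^ 2 * d + c ^ 2 < a * b * c := by
  obtain ⟨p, q, r, t, rfl, rfl, rfl, rfl⟩ := exists_quartic_factor a b c d
  have factor (z : ℂ) : z ^ 4 + ↑(p + r) * z ^ 3 + ↑(q + t + p * r) * z ^ 2 + ↑(p * t + q * r) * z
      + ↑(q * t) = (z ^ 2 + p * z + q) * (z ^ 2 + r * z + t) := by
    push_cast; ring
  simp_rw [factor, mul_eq_zero, or_imp, forall_and, quadratic_roots_re_neg_iff]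
  exact hurwitz_quartic_iff_of_factor p q r t

lemma platoon_hurwitz_gap_iff {ς n : ℝ} (hς : 0 < ς) (hn : 0 < n) (e κs κp κv : ℝ) :
    (e / ς) ^ 2 * (n * κs / ς) + (n * κp / ς) ^ 2 < e / ς * (n * κv / ς) * (n * κp / ς) ↔
      κs * e ^ 2 + ς * n * κp ^ 2 < κv * (n * e * κp) := by
  have scale : e / ς * (n * κv / ς) * (n * κp / ς) -
      ((e / ς) ^ 2 * (n * κs / ς) + (n * κp / ς) ^ 2) =
        (κv * (n * e * κp) - (κs * e ^ 2 + ς * n * κp ^ 2)) * (n / ς ^ 3) := by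
    field_simp
  rw [← sub_pos, scale, mul_pos_iff_of_pos_right (by positivity), sub_pos]

/-- Stability of the platoon quartic characteristic polynomial
`φ(s) = s^4 + ((1+n κa)/ς) s^3 + (n κv/ς) s^2 + (n κp/ς) s + n κs/ς`. -/
theorem platoon_quartic_stability (ς n κs κp κv κa : ℝ) (hς : ς > 0) (hn : n > 0) :
    (∀ z : ℂ, z ^ 4 + (((1 + n * κa) / ς : ℝ) : ℂ) * z ^ 3 + ((n * κv / ς : ℝ) : ℂ) * z ^ 2 +
        ((n * κp / ς : ℝ) : ℂ) * z + ((n * κs / ς : ℝ) : ℂ) = 0 → z.re < 0) ↔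
    (κs > 0 ∧ κp > 0 ∧ κa > -1 / n ∧ κp < κv * (1 + n * κa) / ς ∧
      κv > (κs * (1 + n * κa) ^ 2 + ς * n * κp ^ 2) / (n * (1 + n * κa) * κp)) := by
  rw [quartic_roots_re_neg_iff]
  set e := 1 + n * κa
  have hκa : κa > -1 / n ↔ 0 < e := by
    rw [gt_iff_lt, div_lt_iff₀ hn]
    constructor <;> intro <;> linarith
  simp only [div_pos_iff_of_pos_right hς, mul_pos_iff_of_pos_left hn,
    platoon_hurwitz_gap_iff hς hn, hκa, gt_iff_lt]
  constructor
  · rintro ⟨he, hp, hs, hΔ⟩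
    refine ⟨hs, hp, he, ?_, by rwa [div_lt_iff₀ (by positivity)]⟩
    rw [lt_div_iff₀ hς]
    nlinarith [mul_pos hs (pow_pos he 2), mul_pos hn hp]
  · rintro ⟨hs, hp, he, -, hΔ⟩
    exact ⟨he, hp, hs, by rwa [div_lt_iff₀ (by positivity)] at hΔ⟩
end

section
/- A monic cubic polynomial s^3 + a2 s^2 + a1 s + a0 with real coefficients has all roots with negative real part if and only if a2 > 0, a0 > 0, and a2*a1 > a0. -/
lemma cubic_has_real_root (a0 a1 a2 : ℝ) : ∃ r : ℝ, r^3 + a2*r^2 + a1*r + a0 = 0 := by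
  have h2 := abs_nonneg a2
  have h1 := abs_nonneg a1
  have h0 := abs_nonneg a0
  set M : ℝ := 1 + |a2| + |a1| + |a0| with hM
  have hcont : Continuous (fun x : ℝ => x^3 + a2*x^2 + a1*x + a0) := by continuity
  have hle : (-M : ℝ) ≤ M := by nlinarith
  have hfm : (-M)^3 + a2*(-M)^2 + a1*(-M) + a0 ≤ 0 := by
    have e2 : a2 * M^2 ≤ |a2| * M^2 := by
      nlinarith [le_abs_self a2, sq_nonneg M]
    have e1 : -(a1 * M) ≤ |a1| * M := by
      nlinarith [neg_abs_le a1, abs_nonneg a1]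
    have e0 : a0 ≤ |a0| := le_abs_self a0
    nlinarith [sq_nonneg (|a2| + |a1| + |a0|), sq_nonneg M]
  have hfM : 0 ≤ M^3 + a2*M^2 + a1*M + a0 := by
    have e2 : -(a2 * M^2) ≤ |a2| * M^2 := by
      nlinarith [neg_abs_le a2, sq_nonneg M]
    have e1 : -(a1 * M) ≤ |a1| * M := by
      nlinarith [neg_abs_le a1]
    nlinarith [neg_abs_le a0, sq_nonneg (|a2| + |a1| + |a0|), sq_nonneg M]
  have := intermediate_value_Icc hle hcont.continuousOn
  have h0mem : (0:ℝ) ∈ Set.Icc ((-M)^3 + a2*(-M)^2 + a1*(-M) + a0) (M^3 + a2*M^2 + a1*M + a0) :=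
    ⟨hfm, hfM⟩
  obtain ⟨r, _, hr⟩ := this h0mem
  exact ⟨r, hr⟩

/-- Routh–Hurwitz criterion for a monic real cubic. -/
theorem routh_hurwitz_cubic (a0 a1 a2 : ℝ) :
    (∀ z : ℂ, z ^ 3 + (a2 : ℂ) * z ^ 2 + (a1 : ℂ) * z + (a0 : ℂ) = 0 → z.re < 0) ↔
    (a2 > 0 ∧ a0 > 0 ∧ a2 * a1 > a0) := by
  constructor
  · intro H
    obtain ⟨r, hr⟩ := cubic_has_real_root a0 a1 a2
    have hr' : (r:ℂ)^3 + (a2:ℂ)*(r:ℂ)^2 + (a1:ℂ)*(r:ℂ) + (a0:ℂ) = 0 := by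
      exact_mod_cast congrArg (Complex.ofReal) hr
    have hrneg : r < 0 := by simpa using H r hr'
    set B : ℝ := a2 + r with hB
    set C : ℝ := a1 + a2*r + r^2 with hC
    have hrC : r * C = -a0 := by rw [hC]; linear_combination hr
    have hquad : ∀ z : ℂ, z^2 + (B:ℂ)*z + (C:ℂ) = 0 → z.re < 0 := by
      intro z hzq
      apply H z
      rw [hB, hC] at hzq
      push_cast at hzq ⊢
      linear_combination (z - (r:ℂ)) * hzq + hr'
    have hBC : 0 < B ∧ 0 < C := by
      rcases le_or_gt 0 (B^2 - 4*C) with hΔ | hΔ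
      · set s : ℝ := Real.sqrt (B^2 - 4*C) with hs
        have hs2 : s^2 = B^2 - 4*C := Real.sq_sqrt hΔ
        set x2 : ℝ := (-B + s)/2 with hx2
        set x3 : ℝ := (-B - s)/2 with hx3
        have h2r : x2^2 + B*x2 + C = 0 := by rw [hx2]; linear_combination hs2/4
        have h3r : x3^2 + B*x3 + C = 0 := by rw [hx3]; linear_combination hs2/4
        have h2' : x2 < 0 := by
          simpa using hquad x2 (by exact_mod_cast congrArg Complex.ofReal h2r)
        have h3' : x3 < 0 := by
          simpa using hquad x3 (by exact_mod_cast congrArg Complex.ofReal h3r)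
        constructor
        · rw [hB] at hx2 hx3 ⊢; nlinarith
        · nlinarith [mul_pos (neg_pos.mpr h2') (neg_pos.mpr h3')]
      · have hC0 : 0 < C := by nlinarith [sq_nonneg B]
        set t : ℝ := Real.sqrt (4*C - B^2) with ht
        have ht2 : t^2 = 4*C - B^2 := Real.sq_sqrt (by linarith)
        set z2 : ℂ := ((-B : ℝ) : ℂ)/2 + ((t:ℝ):ℂ)/2 * Complex.I with hz2
        have hz2r : z2^2 + (B:ℂ)*z2 + (C:ℂ) = 0 := by
          have ht2' : ((t:ℝ):ℂ)^2 = 4*(C:ℂ) - (B:ℂ)^2 := by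
            exact_mod_cast congrArg Complex.ofReal ht2
          rw [hz2]
          push_cast
          linear_combination (-(1:ℂ)/4) * ht2' + (((t:ℝ):ℂ)^2/4) * Complex.I_sq
        have := hquad z2 hz2r
        rw [hz2] at this
        simp [Complex.add_re, Complex.div_re] at this
        constructor
        · linarith
        · exact hC0
    obtain ⟨hBpos, hCpos⟩ := hBC
    refine ⟨by rw [hB] at hBpos; linarith, by nlinarith, ?_⟩
    have hkey : a2 * a1 - a0 = B * (C - r*B + r^2) := by rw [hB, hC]; linear_combination -hr
    nlinarith [mul_pos hBpos (by nlinarith : (0:ℝ) < C - r*B + r^2)]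
  · rintro ⟨h2, h0, h21⟩ z hz
    have ha1 : 0 < a1 := by nlinarith
    by_contra hxc
    push_neg at hxc
    have hre := congrArg Complex.re hz
    have him := congrArg Complex.im hz
    simp only [pow_succ, pow_zero, one_mul, Complex.add_re, Complex.add_im, Complex.mul_re,
      Complex.mul_im, Complex.ofReal_re, Complex.ofReal_im, Complex.zero_re,
      Complex.zero_im] at hre him
    ring_nf at hre him
    have hfac : z.im * (3*z.re^2 - z.im^2 + 2*a2*z.re + a1) = 0 := by linear_combination him
    rcases mul_eq_zero.mp hfac with hy | hy
    · rw [hy] at hre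
      nlinarith [hre, pow_nonneg hxc 3, mul_nonneg h2.le (sq_nonneg z.re), mul_nonneg ha1.le hxc]
    · have hy2 : z.im^2 = 3*z.re^2 + 2*a2*z.re + a1 := by linarith
      nlinarith [hre, pow_nonneg hxc 3, mul_nonneg h2.le (sq_nonneg z.re), mul_nonneg ha1.le hxc,
        mul_nonneg (mul_nonneg h2.le h2.le) hxc]
end

section
/- Let M = L + P where L is a directed graph Laplacian and P diagonal nonnegative, and suppose the set J = { i : |m_ii| > Σ_{j≠i}|m_ij| } is nonempty (i.e., at least one node is pinned) and from every node i ∉ J there is a chain of nonzero entries m_{i i1}, m_{i1 i2}, ..., m_{ir j} ending at some j ∈ J. Then M is nonsingular. -/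
open Finset

/-- Shivakumar–Chew criterion applied to `M = L + P` with `L` a directed graph Laplacian
and `P` diagonal nonnegative: if the set `J` of strictly diagonally dominant rows (pinned
nodes) is nonempty and every row outside `J` is connected to a row in `J` through a chain
of nonzero entries, then `M` is nonsingular. -/
theorem laplacian_plus_pinning_wcdd_nonsingular {N : ℕ}
    (L : Matrix (Fin N) (Fin N) ℝ) (p : Fin N → ℝ)
    (hoff : ∀ i j, i ≠ j → L i j ≤ 0)
    (hrow : ∀ i, ∑ j, L i j = 0)
    (hp : ∀ i, 0 ≤ p i)
    (M : Matrix (Fin N) (Fin N) ℝ)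
    (hM : M = L + Matrix.diagonal p)
    (J : Set (Fin N))
    (hJ : J = {i | ∑ j ∈ Finset.univ.erase i, |M i j| < |M i i|})
    (hJne : J.Nonempty)
    (hchain : ∀ i ∉ J, ∃ j ∈ J,
      Relation.ReflTransGen (fun a b => a ≠ b ∧ M a b ≠ 0) i j) :
    M.det ≠ 0 := by
  -- weak diagonal dominance of every row of M
  have hoffM : ∀ i j, i ≠ j → M i j = L i j := by
    intro i j hij
    simp [hM, Matrix.diagonal_apply_ne _ hij]
  have hdom : ∀ i, ∑ j ∈ Finset.univ.erase i, |M i j| ≤ |M i i| := by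
    intro i
    have hsum : ∑ j ∈ Finset.univ.erase i, |M i j| = L i i := by
      have h1 : ∑ j ∈ Finset.univ.erase i, |M i j|
          = ∑ j ∈ Finset.univ.erase i, (-(L i j)) := by
        refine Finset.sum_congr rfl fun j hj => ?_
        have hij : i ≠ j := (Finset.ne_of_mem_erase hj).symm
        rw [hoffM i j hij, abs_of_nonpos (hoff i j hij)]
      have h2 : L i i + ∑ j ∈ Finset.univ.erase i, L i j = 0 := by
        rw [Finset.add_sum_erase _ _ (Finset.mem_univ i)]; exact hrow i
      rw [h1, Finset.sum_neg_distrib]; linarith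
    have hMii : M i i = L i i + p i := by simp [hM]
    have hLnn : 0 ≤ L i i := by
      rw [← hsum]; exact Finset.sum_nonneg fun j _ => abs_nonneg _
    rw [hsum, hMii, abs_of_nonneg (by linarith [hp i])]
    linarith [hp i]
  intro hdet
  obtain ⟨v, hv0, hMv⟩ := (Matrix.exists_mulVec_eq_zero_iff).2 hdet
  obtain ⟨jJ0, hjJ0⟩ := hJne
  haveI : Nonempty (Fin N) := ⟨jJ0⟩
  obtain ⟨i0, -, hmax⟩ := Finset.exists_max_image Finset.univ (fun i => |v i|)
    Finset.univ_nonempty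
  set m : ℝ := |v i0| with hmdef
  have hmax' : ∀ j, |v j| ≤ m := fun j => hmax j (Finset.mem_univ j)
  have hm : 0 < m := by
    obtain ⟨k, hk⟩ := Function.ne_iff.1 hv0
    exact lt_of_lt_of_le (abs_pos.2 hk) (hmax' k)
  -- main inequality for rows of maximal |v|
  have hkey : ∀ i, |v i| = m →
      |M i i| * m ≤ ∑ j ∈ Finset.univ.erase i, |M i j| * |v j| := by
    intro i hi
    have hrowi : ∑ j, M i j * v j = 0 := by
      have := congrFun hMv i
      simpa [Matrix.mulVec, dotProduct] using this
    have heq : M i i * v i = -∑ j ∈ Finset.univ.erase i, M i j * v j := by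
      rw [← Finset.add_sum_erase _ _ (Finset.mem_univ i)] at hrowi
      linarith
    calc |M i i| * m = |M i i * v i| := by rw [abs_mul, hi]
      _ = |∑ j ∈ Finset.univ.erase i, M i j * v j| := by rw [heq, abs_neg]
      _ ≤ ∑ j ∈ Finset.univ.erase i, |M i j * v j| :=
          Finset.abs_sum_le_sum_abs _ _
      _ = ∑ j ∈ Finset.univ.erase i, |M i j| * |v j| := by
          simp [abs_mul]
  have hub : ∀ i, ∑ j ∈ Finset.univ.erase i, |M i j| * m ≤ |M i i| * m := by
    intro i
    rw [← Finset.sum_mul]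
    exact mul_le_mul_of_nonneg_right (hdom i) hm.le
  -- a max-row in J is impossible
  have hkeyJ : ∀ i, |v i| = m → i ∈ J → False := by
    intro i hi hiJ
    rw [hJ] at hiJ
    have h1 := hkey i hi
    have h2 : ∑ j ∈ Finset.univ.erase i, |M i j| * |v j|
        ≤ ∑ j ∈ Finset.univ.erase i, |M i j| * m :=
      Finset.sum_le_sum fun j _ => mul_le_mul_of_nonneg_left (hmax' j) (abs_nonneg _)
    have h3 : (∑ j ∈ Finset.univ.erase i, |M i j|) * m < |M i i| * m :=
      mul_lt_mul_of_pos_right hiJ hm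
    rw [← Finset.sum_mul] at h2
    linarith
  -- the max propagates along nonzero entries
  have hkeyN : ∀ i, |v i| = m → ∀ b, i ≠ b → M i b ≠ 0 → |v b| = m := by
    intro i hi b hib hMib
    by_contra hvb
    have hvblt : |v b| < m := lt_of_le_of_ne (hmax' b) hvb
    have h1 := hkey i hi
    have h2 : ∑ j ∈ Finset.univ.erase i, |M i j| * |v j|
        < ∑ j ∈ Finset.univ.erase i, |M i j| * m := by
      refine Finset.sum_lt_sum (fun j _ =>
        mul_le_mul_of_nonneg_left (hmax' j) (abs_nonneg _)) ⟨b, ?_, ?_⟩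
      · exact Finset.mem_erase.2 ⟨hib.symm, Finset.mem_univ b⟩
      · exact mul_lt_mul_of_pos_left hvblt (abs_pos.2 hMib)
    linarith [hub i]
  have hprop : ∀ i j, Relation.ReflTransGen (fun a b => a ≠ b ∧ M a b ≠ 0) i j →
      |v i| = m → |v j| = m := by
    intro i j h
    induction h with
    | refl => exact id
    | tail hab hbc ih =>
        intro hi
        have hb := ih hi
        exact hkeyN _ hb _ hbc.1 hbc.2
  by_cases hi0 : i0 ∈ J
  · exact hkeyJ i0 rfl hi0
  · obtain ⟨j, hjJ, hch⟩ := hchain i0 hi0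
    exact hkeyJ j (hprop i0 j hch rfl) hjJ
end

section
/- Let M ∈ ℝ^{N×N} have eigenvalues λ_1, ..., λ_N (with multiplicity, over ℂ), and let A ∈ ℂ^{k×k}, B ∈ ℂ^{k×k}. Then the characteristic polynomial of I_N ⊗ A - M ⊗ B equals the product over i of the characteristic polynomials of A - λ_i B. In particular, I_N ⊗ A - M ⊗ B is Hurwitz if and only if A - λ_i B is Hurwitz for every i. -/
/-!
Over an algebraically closed field every endomorphism of a nonzero finite-dimensional space has an
invariant hyperplane (the kernel of an eigenvector of its dual map), so induction on the dimension
triangularizes it: `M = P U P⁻¹` with `U` upper triangular. Conjugating by `P ⊗ 1` turns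
`1 ⊗ A - M ⊗ B` into `1 ⊗ A - U ⊗ B`, which is block upper triangular with diagonal blocks
`A - Uᵢᵢ B`. The diagonal of `U` is the multiset of roots of the characteristic polynomial of `M`,
hence a permutation of the `λᵢ`. The Hurwitz statement follows because the roots of a product are
the roots of its factors.
-/

open Matrix Kronecker Polynomial Module

theorem Module.Basis.mkFinSnoc_repr_coe {R M : Type*} [Ring R] [AddCommGroup M] [Module R M]
    {n : ℕ} {N : Submodule R M} (b : Basis (Fin n) R N) (y : M)
    (hli : ∀ c : R, ∀ x ∈ N, c • y + x = 0 → c = 0) (hsp : ∀ z : M, ∃ c : R, z + c • y ∈ N)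
    (x : N) :
    (b.mkFinSnoc y hli hsp).repr x = Finsupp.mapDomain Fin.castSucc (b.repr x) := by
  have h := b.ext (f₁ := (b.mkFinSnoc y hli hsp).repr.toLinearMap ∘ₗ N.subtype)
    (f₂ := Finsupp.lmapDomain R R Fin.castSucc ∘ₗ b.repr.toLinearMap) fun i => by
      have hbi : (b i : M) = b.mkFinSnoc y hli hsp i.castSucc := by simp
      rw [LinearMap.comp_apply, Submodule.subtype_apply, hbi, LinearEquiv.coe_coe,
        Basis.repr_self]
      simp
  exact LinearMap.congr_fun h x

theorem LinearMap.isUpperTriangular_toMatrix_mkFinSnoc {R M : Type*} [CommRing R] [AddCommGroup M]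
    [Module R M] {n : ℕ} (f : Module.End R M) {N : Submodule R M} (hN : ∀ x ∈ N, f x ∈ N)
    (b : Basis (Fin n) R N) (hb : (LinearMap.toMatrix b b (f.restrict hN)).IsUpperTriangular)
    (y : M) (hli : ∀ c : R, ∀ x ∈ N, c • y + x = 0 → c = 0)
    (hsp : ∀ z : M, ∃ c : R, z + c • y ∈ N) :
    (LinearMap.toMatrix (b.mkFinSnoc y hli hsp) (b.mkFinSnoc y hli hsp) f).IsUpperTriangular := by
  intro i j hij
  induction j using Fin.lastCases with
  | last => exact absurd hij (not_lt.2 i.le_last)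
  | cast j =>
    have hfj : f (b.mkFinSnoc y hli hsp j.castSucc) = (f.restrict hN (b j) : M) := by simp
    rw [toMatrix_apply, hfj, Basis.mkFinSnoc_repr_coe]
    induction i using Fin.lastCases with
    | last => exact Finsupp.mapDomain_of_notMem_range _ _ (by simp)
    | cast i =>
      rw [Finsupp.mapDomain_apply (Fin.castSucc_injective n), ← toMatrix_apply]
      exact hb (Fin.castSucc_lt_castSucc_iff.1 hij)

namespace Module.End

variable {K V : Type*} [Field K] [IsAlgClosed K] [AddCommGroup V] [Module K V]
  [FiniteDimensional K V]

theorem exists_invariant_hyperplane [Nontrivial V] (f : End K V) :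
    ∃ φ : Dual K V, φ ≠ 0 ∧ ∀ x ∈ LinearMap.ker φ, f x ∈ LinearMap.ker φ := by
  obtain ⟨μ, hμ⟩ := exists_eigenvalue f.dualMap
  obtain ⟨φ, hφ⟩ := hμ.exists_hasEigenvector
  refine ⟨φ, hφ.2, fun x hx => ?_⟩
  have hφf : φ ∘ₗ f = μ • φ := hφ.apply_eq_smul
  rw [LinearMap.mem_ker] at hx ⊢
  simpa [hx] using LinearMap.congr_fun hφf x

theorem exists_basis_isUpperTriangular_toMatrix {n : ℕ} (hn : finrank K V = n) (f : End K V) :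
    ∃ b : Basis (Fin n) K V, (LinearMap.toMatrix b b f).IsUpperTriangular := by
  induction n generalizing V with
  | zero => exact ⟨finBasisOfFinrankEq K V hn, fun i => i.elim0⟩
  | succ n ih =>
    have := nontrivial_of_finrank_eq_succ hn
    obtain ⟨φ, hφ0, hN⟩ := f.exists_invariant_hyperplane
    obtain ⟨v, hv⟩ : ∃ v, φ v ≠ 0 := by simpa [LinearMap.ext_iff] using hφ0
    set y := (φ v)⁻¹ • v
    have hy : φ y = 1 := by simp [y, hv]
    have hrange : LinearMap.range φ = ⊤ :=
      LinearMap.range_eq_top.2 fun c => ⟨c • y, by simp [hy]⟩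
    have hker : finrank K (LinearMap.ker φ) = n := by
      have := φ.finrank_range_add_finrank_ker
      rw [hrange, finrank_top, finrank_self, hn] at this
      omega
    obtain ⟨b, hb⟩ := ih hker (f.restrict hN)
    have hli : ∀ c : K, ∀ x ∈ LinearMap.ker φ, c • y + x = 0 → c = 0 := fun c x hx h => by
      simpa [hy, LinearMap.mem_ker.1 hx] using congr_arg φ h
    have hsp : ∀ z : V, ∃ c : K, z + c • y ∈ LinearMap.ker φ := fun z =>
      ⟨-φ z, by simp [hy]⟩
    exact ⟨b.mkFinSnoc y hli hsp, f.isUpperTriangular_toMatrix_mkFinSnoc hN b hb y hli hsp⟩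

end Module.End

theorem Matrix.exists_units_conj_isUpperTriangular {K : Type*} [Field K] [IsAlgClosed K] {n : ℕ}
    (M : Matrix (Fin n) (Fin n) K) :
    ∃ P : (Matrix (Fin n) (Fin n) K)ˣ, (P⁻¹.val * M * P.val).IsUpperTriangular := by
  obtain ⟨b, hb⟩ :=
    Module.End.exists_basis_isUpperTriangular_toMatrix (finrank_fin_fun K) (toLin' M)
  set c := Pi.basisFun K (Fin n)
  refine ⟨⟨c.toMatrix b, b.toMatrix c, c.toMatrix_mul_toMatrix_flip b,
    b.toMatrix_mul_toMatrix_flip c⟩, ?_⟩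
  convert hb
  rw [← basis_toMatrix_mul_linearMap_toMatrix_mul_basis_toMatrix (b' := c) (c' := c),
    LinearMap.toMatrix_eq_toMatrix', LinearMap.toMatrix'_toLin']
  rfl

theorem Polynomial.prod_apply_eq_prod_map_roots {R P ι : Type*} [CommRing R] [IsDomain R]
    [CommMonoid P] [Fintype ι] {p : R[X]} {f : ι → R} (hp : p = ∏ i, (X - C (f i))) (φ : R → P) :
    ∏ i, φ (f i) = (p.roots.map φ).prod := by
  have hprod : ∏ i, (X - C (f i)) = ((Finset.univ.val.map f).map fun a => X - C a).prod := by
    rw [Multiset.map_map]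
    rfl
  rw [hp, hprod, roots_multiset_prod_X_sub_C, Multiset.map_map]
  rfl

namespace Matrix

variable {R n m : Type*} [CommRing R] [Fintype n] [DecidableEq n] [Fintype m] [DecidableEq m]

theorem charpoly_one_kronecker_sub_kronecker_units_conj (P : (Matrix n n R)ˣ) (M : Matrix n n R)
    (A B : Matrix m m R) :
    (1 ⊗ₖ A - (P⁻¹.val * M * P.val) ⊗ₖ B).charpoly = (1 ⊗ₖ A - M ⊗ₖ B).charpoly := by
  have hconj : 1 ⊗ₖ A - (P⁻¹.val * M * P.val) ⊗ₖ B =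
      (P⁻¹.val ⊗ₖ 1) * (1 ⊗ₖ A - M ⊗ₖ B) * (P.val ⊗ₖ 1) := by
    simp only [Matrix.mul_sub, Matrix.sub_mul, ← mul_kronecker_mul, Matrix.mul_one, Matrix.one_mul,
      Units.inv_mul]
  rw [hconj, charpoly_mul_comm, ← Matrix.mul_assoc, ← mul_kronecker_mul, Units.mul_inv,
    Matrix.one_mul, one_kronecker_one, Matrix.one_mul]

theorem charpoly_toSquareBlock_fst (X : Matrix (n × m) (n × m) R) (a : n) :
    (X.toSquareBlock Prod.fst a).charpoly = (X.submatrix (a, ·) (a, ·)).charpoly := by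
  let e : {x : n × m // x.1 = a} ≃ m :=
    ⟨fun x => x.1.2, fun j => ⟨(a, j), rfl⟩, fun ⟨⟨_, _⟩, h⟩ => by subst h; rfl, fun _ => rfl⟩
  rw [← charpoly_reindex e]
  rfl

theorem charpoly_one_kronecker_sub_kronecker_of_isUpperTriangular [LinearOrder n]
    {U : Matrix n n R} (hU : U.IsUpperTriangular) (A B : Matrix m m R) :
    (1 ⊗ₖ A - U ⊗ₖ B).charpoly = ∏ i, (A - U i i • B).charpoly := by
  have hblock : (1 ⊗ₖ A - U ⊗ₖ B).BlockTriangular Prod.fst := by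
    rintro ⟨i, p⟩ ⟨j, q⟩ (hji : j < i)
    simp [one_apply_ne hji.ne', hU hji]
  rw [charpoly, hblock.charmatrix.det_fintype]
  refine Finset.prod_congr rfl fun i _ => ?_
  rw [← charmatrix_toSquareBlock, ← charpoly, charpoly_toSquareBlock_fst]
  congr 1
  ext p q
  simp

theorem charpoly_one_kronecker_sub_kronecker_eq_prod {K : Type*} [Field K] [IsAlgClosed K] {N : ℕ}
    {M : Matrix (Fin N) (Fin N) K} {lam : Fin N → K} (hlam : M.charpoly = ∏ i, (X - C (lam i)))
    (A B : Matrix m m K) :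
    (1 ⊗ₖ A - M ⊗ₖ B).charpoly = ∏ i, (A - lam i • B).charpoly := by
  obtain ⟨P, hU⟩ := M.exists_units_conj_isUpperTriangular
  have hdiag : M.charpoly = ∏ i, (X - C ((P⁻¹.val * M * P.val) i i)) := by
    rw [← charpoly_units_conj' P M, ← coe_units_inv]
    exact charpoly_of_isUpperTriangular _ hU
  rw [← charpoly_one_kronecker_sub_kronecker_units_conj P,
    charpoly_one_kronecker_sub_kronecker_of_isUpperTriangular hU,
    prod_apply_eq_prod_map_roots hdiag fun c => (A - c • B).charpoly]
  exact (prod_apply_eq_prod_map_roots hlam _).symm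

end Matrix

/-- If `M` has eigenvalues `λ₁, …, λ_N` (with multiplicity, over `ℂ`), then the
characteristic polynomial of `I_N ⊗ A - M ⊗ B` is the product of the characteristic
polynomials of the `A - λᵢ B`; in particular `I_N ⊗ A - M ⊗ B` is Hurwitz iff each
`A - λᵢ B` is Hurwitz. -/
theorem kronecker_charpoly_prod_and_hurwitz {N k : ℕ}
    (M : Matrix (Fin N) (Fin N) ℝ) (lam : Fin N → ℂ)
    (hlam : (M.map (Complex.ofReal)).charpoly = ∏ i, (X - C (lam i)))
    (A B : Matrix (Fin k) (Fin k) ℂ) :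
    ((1 : Matrix (Fin N) (Fin N) ℂ) ⊗ₖ A - (M.map (Complex.ofReal)) ⊗ₖ B).charpoly =
      ∏ i, (A - lam i • B).charpoly ∧
    ((∀ z : ℂ, (((1 : Matrix (Fin N) (Fin N) ℂ) ⊗ₖ A -
        (M.map (Complex.ofReal)) ⊗ₖ B).charpoly).IsRoot z → z.re < 0) ↔
      ∀ i, ∀ z : ℂ, ((A - lam i • B).charpoly).IsRoot z → z.re < 0) := by
  have hprod := charpoly_one_kronecker_sub_kronecker_eq_prod hlam A B
  refine ⟨hprod, ?_⟩
  simp only [hprod, isRoot_prod, Finset.mem_univ, true_and]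
  exact ⟨fun h i z hz => h z ⟨i, hz⟩, fun h z ⟨i, hz⟩ => h i z hz⟩
end
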